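/- Let P be a finite set of positive integers, m = min P, and Q = {p - m : p ∈ P, p ≠ m} ∪ {m}. For any k ≥ 0, the word FW(Q,k) is a prefix of FW(P,k+m). -/

import Mathlib

/-!
Write `m = min P`. Every generator of `∼_{Q,k}` is realised inside `≈_{P,k+m}`: a jump by
`p - m` is a jump by `p` followed by a jump back by `m`, and residues modulo `min Q` are linked
by jumps by `min Q ∈ Q`. Conversely, folding the last `m` positions of `[0, k + m)` back by `m`
sends every generator of `∼_{P,k+m}` into `≈_{Q,k}`. The folding fixes `[0, k)`, and the least
element of the `P`-class of `i < k` lies below `i`, so both classes of `i` have the same minimum.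
-/

/-- minimum of a finite set of naturals (as `sInf`). -/
noncomputable def mP (P : Finset ℕ) : ℕ := sInf (↑P : Set ℕ)

/-- the generating relation `∼_{P,k}` on `{0,…,k-1}`. -/
def simRel (P : Finset ℕ) (k i j : ℕ) : Prop :=
  i < k ∧ j < k ∧ (i % mP P = j % mP P ∨
    ∃ i' j', i' < k ∧ j' < k ∧ i' % mP P = i % mP P ∧ j' % mP P = j % mP P ∧
      (max i' j' - min i' j') ∈ P)

/-- the class of `i` under the equivalence closure `≈_{P,k}`. -/
def cls (P : Finset ℕ) (k i : ℕ) : Set ℕ := {j | Relation.EqvGen (simRel P k) i j}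

/-- the FW-word: `FW P k i = min [i]_{P,k}`. -/
noncomputable def FW (P : Finset ℕ) (k : ℕ) : ℕ → ℕ := fun i => sInf (cls P k i)

/-- Euclidean reduction `Q = {p - m : p ∈ P, p ≠ m} ∪ {m}`. -/
noncomputable def Qred (P : Finset ℕ) : Finset ℕ :=
  ((P.erase (mP P)).image (fun p => p - mP P)) ∪ {mP P}

/-- `p` is a period of the word `w` of length `n`. -/
def HasPeriodF {A : Type*} (w : ℕ → A) (n p : ℕ) : Prop :=
  ∀ i, i + p < n → w i = w (i + p)

open Relation

lemma mP_mem {P : Finset ℕ} (hP : P.Nonempty) : mP P ∈ P :=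
  Nat.sInf_mem (s := (P : Set ℕ)) (Finset.coe_nonempty.mpr hP)

lemma mP_le {P : Finset ℕ} {p : ℕ} (hp : p ∈ P) : mP P ≤ p :=
  Nat.sInf_le hp

lemma mP_mem_Qred (P : Finset ℕ) : mP P ∈ Qred P :=
  Finset.mem_union_right _ (Finset.mem_singleton_self _)

lemma mP_Qred_mem_Qred (P : Finset ℕ) : mP (Qred P) ∈ Qred P :=
  mP_mem ⟨mP P, mP_mem_Qred P⟩

lemma sub_mP_mem_Qred {P : Finset ℕ} {p : ℕ} (hp : p ∈ P) (hne : p ≠ mP P) :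
    p - mP P ∈ Qred P :=
  Finset.mem_union_left _ (Finset.mem_image.mpr ⟨p, Finset.mem_erase.mpr ⟨hne, hp⟩, rfl⟩)

lemma eq_mP_or_eq_sub_of_mem_Qred {P : Finset ℕ} {q : ℕ} (hq : q ∈ Qred P) :
    q = mP P ∨ ∃ p ∈ P, mP P < p ∧ q = p - mP P := by
  rcases Finset.mem_union.mp hq with h | h
  · obtain ⟨p, hp, rfl⟩ := Finset.mem_image.mp h
    obtain ⟨hne, hpP⟩ := Finset.mem_erase.mp hp
    exact Or.inr ⟨p, hpP, (mP_le hpP).lt_of_ne' hne, rfl⟩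
  · exact Or.inl (Finset.mem_singleton.mp h)

lemma simRel_of_mod_eq {P : Finset ℕ} {n x y : ℕ} (hx : x < n) (hy : y < n)
    (h : x % mP P = y % mP P) : simRel P n x y :=
  ⟨hx, hy, Or.inl h⟩

lemma simRel_add_of_mem {P : Finset ℕ} {n x p : ℕ} (hp : p ∈ P) (h : x + p < n) :
    simRel P n x (x + p) :=
  ⟨by omega, h, Or.inr ⟨x, x + p, by omega, h, rfl, rfl, by rwa [max_eq_right (by omega),
    min_eq_left (by omega), Nat.add_sub_cancel_left]⟩⟩

section Equivalence

variable {R : ℕ → ℕ → Prop} {n : ℕ}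

lemma Equivalence.rel_of_mod_eq (hR : Equivalence R) {d : ℕ}
    (hstep : ∀ x, x + d < n → R x (x + d)) {x y : ℕ} (hx : x < n) (hy : y < n)
    (h : x % d = y % d) : R x y := by
  wlog hxy : x ≤ y generalizing x y
  · exact hR.symm (this hy hx h.symm (by omega))
  have hmul : ∀ t, x + t * d < n → R x (x + t * d) := by
    intro t
    induction t with
    | zero => simpa using fun _ => hR.refl x
    | succ t ih =>
      intro ht
      rw [add_mul, one_mul, ← add_assoc] at ht ⊢
      exact hR.trans (ih (by omega)) (hstep _ ht)
  obtain ⟨t, ht⟩ := (Nat.modEq_iff_dvd' hxy).mp h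
  obtain rfl : y = x + t * d := by rw [mul_comm]; omega
  exact hmul t hy

variable {P : Finset ℕ}

lemma Equivalence.rel_of_eqvGen_simRel (hR : Equivalence R)
    (hmod : ∀ x y, x < n → y < n → x % mP P = y % mP P → R x y)
    (hadd : ∀ x p, p ∈ P → x + p < n → R x (x + p)) {i j : ℕ}
    (h : EqvGen (simRel P n) i j) : R i j := by
  have hdist : ∀ a b, a < n → b < n → max a b - min a b ∈ P → R a b := by
    intro a b ha hb hab
    wlog hle : a ≤ b generalizing a b
    · exact hR.symm (this b a hb ha (by rwa [max_comm, min_comm]) (by omega))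
    rw [max_eq_right hle, min_eq_left hle] at hab
    simpa [Nat.add_sub_cancel' hle] using hadd a (b - a) hab (by omega)
  refine hR.eqvGen_iff.mp (EqvGen.mono ?_ _ _ h)
  rintro a b ⟨ha, hb, hab | ⟨a', b', ha', hb', ha'a, hb'b, hd⟩⟩
  · exact hmod a b ha hb hab
  · exact hR.trans (hmod a a' ha ha' ha'a.symm)
      (hR.trans (hdist a' b' ha' hb' hd) (hmod b' b hb' hb hb'b))

end Equivalence

def foldWindow (k m x : ℕ) : ℕ := if x < k then x else x - m

section Reduction

variable {P : Finset ℕ} {k : ℕ}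

lemma eqvGen_simRel_add_of_mem_Qred (hP : P.Nonempty) {x q : ℕ} (hq : q ∈ Qred P)
    (hxq : x + q < k) : EqvGen (simRel P (k + mP P)) x (x + q) := by
  rcases eq_mP_or_eq_sub_of_mem_Qred hq with rfl | ⟨p, hp, hlt, rfl⟩
  · exact .rel _ _ (simRel_add_of_mem (mP_mem hP) (by omega))
  · have hback : (x + (p - mP P)) % mP P = (x + p) % mP P := by
      rw [← Nat.add_mod_right, Nat.add_assoc, Nat.sub_add_cancel hlt.le]
    exact .trans _ _ _ (.rel _ _ (simRel_add_of_mem hp (by omega)))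
      (.rel _ _ (simRel_of_mod_eq (by omega) (by omega) hback.symm))

lemma eqvGen_simRel_of_eqvGen_simRel_Qred (hP : P.Nonempty) {i j : ℕ}
    (h : EqvGen (simRel (Qred P) k) i j) : EqvGen (simRel P (k + mP P)) i j := by
  have hadd : ∀ x q, q ∈ Qred P → x + q < k → EqvGen (simRel P (k + mP P)) x (x + q) :=
    fun _ _ hq hxq => eqvGen_simRel_add_of_mem_Qred hP hq hxq
  refine (EqvGen.is_equivalence _).rel_of_eqvGen_simRel (fun x y hx hy hxy => ?_) hadd h
  exact (EqvGen.is_equivalence _).rel_of_mod_eq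
    (fun z hz => hadd z _ (mP_Qred_mem_Qred P) hz) hx hy hxy

lemma foldWindow_of_lt {m x : ℕ} (hx : x < k) : foldWindow k m x = x := if_pos hx

lemma eqvGen_simRel_Qred_foldWindow_add_mP {x : ℕ} (hx : x < k) :
    EqvGen (simRel (Qred P) k) (foldWindow k (mP P) x) (foldWindow k (mP P) (x + mP P)) := by
  rw [foldWindow_of_lt hx]
  by_cases hxm : x + mP P < k
  · rw [foldWindow_of_lt hxm]
    exact .rel _ _ (simRel_add_of_mem (mP_mem_Qred P) hxm)
  · rw [foldWindow, if_neg hxm, Nat.add_sub_cancel]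
    exact .refl x

lemma eqvGen_simRel_Qred_foldWindow_add_of_mem {x p : ℕ} (hp : p ∈ P)
    (hxp : x + p < k + mP P) :
    EqvGen (simRel (Qred P) k) (foldWindow k (mP P) x) (foldWindow k (mP P) (x + p)) := by
  obtain rfl | hne := eq_or_ne p (mP P)
  · exact eqvGen_simRel_Qred_foldWindow_add_mP (by omega)
  have hlt : mP P < p := (mP_le hp).lt_of_ne' hne
  have hxq : x + (p - mP P) < k := by omega
  have hfold := eqvGen_simRel_Qred_foldWindow_add_mP (P := P) hxq
  rw [Nat.add_assoc, Nat.sub_add_cancel hlt.le, foldWindow_of_lt hxq] at hfold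
  rw [foldWindow_of_lt (by omega : x < k)]
  exact .trans _ _ _ (.rel _ _ (simRel_add_of_mem (sub_mP_mem_Qred hp hne) hxq)) hfold

lemma eqvGen_simRel_Qred_foldWindow {i j : ℕ} (h : EqvGen (simRel P (k + mP P)) i j) :
    EqvGen (simRel (Qred P) k) (foldWindow k (mP P) i) (foldWindow k (mP P) j) := by
  have hR := (EqvGen.is_equivalence (simRel (Qred P) k)).comap (foldWindow k (mP P))
  refine hR.rel_of_eqvGen_simRel (fun x y hx hy hxy => ?_)
    (fun _ _ hp hxp => eqvGen_simRel_Qred_foldWindow_add_of_mem hp hxp) h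
  exact hR.rel_of_mod_eq (fun z hz => eqvGen_simRel_Qred_foldWindow_add_mP (by omega)) hx hy hxy

end Reduction

lemma FW_mem_cls (P : Finset ℕ) (n i : ℕ) : FW P n i ∈ cls P n i :=
  Nat.sInf_mem ⟨i, EqvGen.refl i⟩

lemma FW_le_of_mem_cls {P : Finset ℕ} {n i j : ℕ} (h : j ∈ cls P n i) : FW P n i ≤ j :=
  Nat.sInf_le h

theorem stmt6_general (P : Finset ℕ) (hP : P.Nonempty) (k : ℕ) :
    ∀ i < k, FW (Qred P) k i = FW P (k + mP P) i := by
  intro i hi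
  have hmin_lt : FW P (k + mP P) i < k :=
    (FW_le_of_mem_cls (EqvGen.refl i)).trans_lt hi
  have hfold := eqvGen_simRel_Qred_foldWindow (FW_mem_cls P (k + mP P) i)
  rw [foldWindow_of_lt hi, foldWindow_of_lt hmin_lt] at hfold
  exact le_antisymm (FW_le_of_mem_cls hfold)
    (FW_le_of_mem_cls (eqvGen_simRel_of_eqvGen_simRel_Qred hP (FW_mem_cls _ k i)))

theorem stmt6 (P : Finset ℕ) (hP : P.Nonempty) (hpos : ∀ p ∈ P, 0 < p) (k : ℕ) :
    ∀ i < k, FW (Qred P) k i = FW P (k + mP P) i :=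
  stmt6_general P hP k
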